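/- Radial weighted Poincaré inequality with mean-zero condition (mode k = 0): For every C¹ function v : (0,1) → ℝ such that ∫₀¹ (1−r²) v′(r)² (1−r²)^α r^{N−1} dr < ∞ and ∫₀¹ v(r)² (1−r²)^α r^{N−1} dr < ∞, if ∫₀¹ v(r) (1−r²)^α r^{N−1} dr = 0, then ∫₀¹ (1−r²) v′(r)² (1−r²)^α r^{N−1} dr ≥ (2(3p+1)/(p−1)) ∫₀¹ v(r)² (1−r²)^α r^{N−1} dr. -/

import Mathlib

/-!
For the weight `w = (1 - r²)^α r^(N-1)` and `L = N + 2α + 2 = (3p+1)/(p-1)`, the function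
`φ = r² - N/L` solves `-((1 - r²) w φ')' = 2L w φ` on `(0, 1)`. Picone's identity
`(P φ' u² / φ)' = P u'² - 2L w u² - P (u' - φ' u / φ)²`, with `P = (1 - r²) w`, integrated over the
two nodal intervals `(0, √(N/L))` and `(√(N/L), 1)`, gives `2L ∫ u² w ≤ ∫ (1 - r²) u'² w` for every
`u` vanishing at the node: the boundary term tends to `0` at the node and has the favourable sign
near `0` and `1`. Apply this to `u = v - v(√(N/L))`; since `∫ v w = 0`, `∫ v² w ≤ ∫ u² w`.
-/

open MeasureTheory

noncomputable section

/-- The exponent `α = 2/(p−1) − (N−1)/2`. -/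
def alphaExp (N : ℕ) (p : ℝ) : ℝ := 2 / (p - 1) - ((N : ℝ) - 1) / 2

open Set Filter Topology

theorem tendsto_intervalIntegral_setIntegral_Ioo {f : ℝ → ℝ} {a b : ℝ} (hab : a < b)
    (hf : IntegrableOn f (Ioo a b)) :
    Tendsto (fun st : ℝ × ℝ => ∫ x in st.1..st.2, f x) (𝓝[>] a ×ˢ 𝓝[<] b)
      (𝓝 (∫ x in Ioo a b, f x)) := by
  have hcover : AECover (volume.restrict (Ioo a b)) (𝓝[>] a ×ˢ 𝓝[<] b)
      fun st : ℝ × ℝ => Ioc st.1 st.2 :=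
    aecover_Ioo_of_Ioc (tendsto_fst.mono_right nhdsWithin_le_nhds)
      (tendsto_snd.mono_right nhdsWithin_le_nhds)
  refine (hcover.integral_tendsto_of_countably_generated hf).congr' ?_
  obtain ⟨m, ham, hmb⟩ := exists_between hab
  filter_upwards [prod_mem_prod (Ioo_mem_nhdsGT ham) (Ioo_mem_nhdsLT hmb)]
    with st ⟨⟨has, hsm⟩, hmt, htb⟩
  rw [Measure.restrict_restrict measurableSet_Ioc,
    inter_eq_left.2 (Ioc_subset_Ioo has.le htb), intervalIntegral.integral_of_le (by linarith)]

theorem setIntegral_Ioo_nonneg_of_sub_le {f G : ℝ → ℝ} {a b : ℝ} (hab : a < b)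
    (hf : IntegrableOn f (Ioo a b))
    (hG : ∀ s t, a < s → s ≤ t → t < b → G t - G s ≤ ∫ x in s..t, f x)
    (ha : Tendsto (fun s => max (G s) 0) (𝓝[>] a) (𝓝 0))
    (hb : Tendsto (fun t => min (G t) 0) (𝓝[<] b) (𝓝 0)) :
    0 ≤ ∫ x in Ioo a b, f x := by
  have hlim : Tendsto (fun st : ℝ × ℝ => min (G st.2) 0 - max (G st.1) 0)
      (𝓝[>] a ×ˢ 𝓝[<] b) (𝓝 0) := by
    simpa using (hb.comp tendsto_snd).sub (ha.comp tendsto_fst)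
  refine le_of_tendsto_of_tendsto hlim (tendsto_intervalIntegral_setIntegral_Ioo hab hf) ?_
  obtain ⟨m, ham, hmb⟩ := exists_between hab
  filter_upwards [prod_mem_prod (Ioo_mem_nhdsGT ham) (Ioo_mem_nhdsLT hmb)]
    with st ⟨⟨has, hsm⟩, hmt, htb⟩
  linarith [hG st.1 st.2 has (hsm.trans hmt).le htb, min_le_left (G st.2) 0,
    le_max_left (G st.1) 0]

theorem setIntegral_Ioo_eq_add {f : ℝ → ℝ} {a b c : ℝ} (hc : c ∈ Ioo a b)
    (hf : IntegrableOn f (Ioo a b)) :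
    ∫ x in Ioo a b, f x = (∫ x in Ioo a c, f x) + ∫ x in Ioo c b, f x := by
  have hac := (intervalIntegrable_iff_integrableOn_Ioo_of_le hc.1.le).2
    (hf.mono_set (Ioo_subset_Ioo_right hc.2.le))
  have hcb := (intervalIntegrable_iff_integrableOn_Ioo_of_le hc.2.le).2
    (hf.mono_set (Ioo_subset_Ioo_left hc.1.le))
  simp only [← integral_Ioc_eq_integral_Ioo, ← intervalIntegral.integral_of_le hc.1.le,
    ← intervalIntegral.integral_of_le hc.2.le,
    ← intervalIntegral.integral_of_le (hc.1.trans hc.2).le]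
  exact (intervalIntegral.integral_add_adjacent_intervals hac hcb).symm

/-- Picone's function `P φ' u² / φ`, where `dφ` plays the role of `φ'`. -/
def piconeFun (P dφ φ u : ℝ → ℝ) (x : ℝ) : ℝ := P x * dφ x * (u x ^ 2 / φ x)

section Picone

variable {P ρ φ dφ u u' : ℝ → ℝ} {κ : ℝ}

theorem hasDerivAt_piconeFun {x : ℝ} (hφ : HasDerivAt φ (dφ x) x)
    (hflux : HasDerivAt (fun y => P y * dφ y) (-(κ * ρ x * φ x)) x)
    (hu : HasDerivAt u (u' x) x) (hφx : φ x ≠ 0) :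
    HasDerivAt (piconeFun P dφ φ u)
      (P x * u' x ^ 2 - κ * ρ x * u x ^ 2 - P x * (u' x - dφ x / φ x * u x) ^ 2) x := by
  refine (hflux.mul ((hu.fun_pow 2).fun_div hφ hφx)).congr_deriv ?_
  field_simp
  ring

theorem piconeFun_nonpos {x : ℝ} (hP : 0 ≤ P x) (hdφ : 0 ≤ dφ x) (hφ : φ x ≤ 0) :
    piconeFun P dφ φ u x ≤ 0 :=
  mul_nonpos_of_nonneg_of_nonpos (mul_nonneg hP hdφ)
    (div_nonpos_of_nonneg_of_nonpos (sq_nonneg _) hφ)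

theorem piconeFun_nonneg {x : ℝ} (hP : 0 ≤ P x) (hdφ : 0 ≤ dφ x) (hφ : 0 ≤ φ x) :
    0 ≤ piconeFun P dφ φ u x :=
  mul_nonneg (mul_nonneg hP hdφ) (div_nonneg (sq_nonneg _) hφ)

theorem piconeFun_sub_le_integral {s t : ℝ} (hst : s ≤ t) (hP : ∀ x ∈ Icc s t, 0 ≤ P x)
    (hφ : ∀ x ∈ Icc s t, HasDerivAt φ (dφ x) x)
    (hflux : ∀ x ∈ Icc s t, HasDerivAt (fun y => P y * dφ y) (-(κ * ρ x * φ x)) x)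
    (hu : ∀ x ∈ Icc s t, HasDerivAt u (u' x) x) (hφ0 : ∀ x ∈ Icc s t, φ x ≠ 0)
    (hint : IntegrableOn (fun x => P x * u' x ^ 2 - κ * ρ x * u x ^ 2) (Icc s t)) :
    piconeFun P dφ φ u t - piconeFun P dφ φ u s ≤
      ∫ x in s..t, (P x * u' x ^ 2 - κ * ρ x * u x ^ 2) := by
  have hG : ∀ x ∈ Icc s t, HasDerivAt (piconeFun P dφ φ u)
      (P x * u' x ^ 2 - κ * ρ x * u x ^ 2 - P x * (u' x - dφ x / φ x * u x) ^ 2) x :=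
    fun x hx => hasDerivAt_piconeFun (hφ x hx) (hflux x hx) (hu x hx) (hφ0 x hx)
  refine intervalIntegral.sub_le_integral_of_hasDeriv_right_of_le hst
    (fun x hx => (hG x hx).continuousAt.continuousWithinAt)
    (fun x hx => (hG x (Ioo_subset_Icc_self hx)).hasDerivWithinAt) hint fun x hx => ?_
  have := hP x (Ioo_subset_Icc_self hx)
  nlinarith [mul_nonneg this (sq_nonneg (u' x - dφ x / φ x * u x))]

theorem tendsto_sq_div_of_hasDerivAt {c du dφc : ℝ} (hu : HasDerivAt u du c) (huc : u c = 0)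
    (hφ : HasDerivAt φ dφc c) (hφc : φ c = 0) (hdφc : dφc ≠ 0) :
    Tendsto (fun x => u x ^ 2 / φ x) (𝓝[≠] c) (𝓝 0) := by
  have hlim : Tendsto (fun x => (x - c) * slope u c x ^ 2 / slope φ c x) (𝓝[≠] c)
      (𝓝 ((c - c) * du ^ 2 / dφc)) :=
    (((tendsto_id.sub_const c).mono_left nhdsWithin_le_nhds).mul
      ((hasDerivAt_iff_tendsto_slope.1 hu).pow 2)).div (hasDerivAt_iff_tendsto_slope.1 hφ) hdφc
  rw [sub_self, zero_mul, zero_div] at hlim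
  refine hlim.congr' (eventually_nhdsWithin_of_forall fun x hx => ?_)
  have hxc : x - c ≠ 0 := sub_ne_zero.2 hx
  rw [slope_def_field, slope_def_field, huc, hφc, sub_zero, sub_zero]
  field_simp

theorem setIntegral_Ioo_picone_nonneg {a b c : ℝ} (hc : c ∈ Ioo a b)
    (hP : ∀ x ∈ Ioo a b, 0 ≤ P x) (hdφ : ∀ x ∈ Ioo a b, 0 ≤ dφ x)
    (hφ : ∀ x ∈ Ioo a b, HasDerivAt φ (dφ x) x)
    (hflux : ∀ x ∈ Ioo a b, HasDerivAt (fun y => P y * dφ y) (-(κ * ρ x * φ x)) x)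
    (hφ_neg : ∀ x ∈ Ioo a c, φ x < 0) (hφ_pos : ∀ x ∈ Ioo c b, 0 < φ x) (hφc : φ c = 0)
    (hdφc : dφ c ≠ 0) (hu : ∀ x ∈ Ioo a b, HasDerivAt u (u' x) x) (huc : u c = 0)
    (hint : IntegrableOn (fun x => P x * u' x ^ 2 - κ * ρ x * u x ^ 2) (Ioo a b)) :
    0 ≤ ∫ x in Ioo a b, (P x * u' x ^ 2 - κ * ρ x * u x ^ 2) := by
  set G := piconeFun P dφ φ u
  have hGc : Tendsto G (𝓝[≠] c) (𝓝 0) := by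
    have := ((hflux c hc).continuousAt.tendsto.mono_left nhdsWithin_le_nhds).mul
      (tendsto_sq_div_of_hasDerivAt (hu c hc) huc (hφ c hc) hφc hdφc)
    rwa [mul_zero] at this
  have hsub : ∀ s t, a < s → s ≤ t → t < b → (∀ x ∈ Icc s t, φ x ≠ 0) →
      G t - G s ≤ ∫ x in s..t, (P x * u' x ^ 2 - κ * ρ x * u x ^ 2) := by
    intro s t has hst htb hφ0
    have hst_sub : Icc s t ⊆ Ioo a b := Icc_subset_Ioo has htb
    exact piconeFun_sub_le_integral hst (fun x hx => hP x (hst_sub hx))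
      (fun x hx => hφ x (hst_sub hx)) (fun x hx => hflux x (hst_sub hx))
      (fun x hx => hu x (hst_sub hx)) hφ0 (hint.mono_set hst_sub)
  have hleft : 0 ≤ ∫ x in Ioo a c, (P x * u' x ^ 2 - κ * ρ x * u x ^ 2) := by
    refine setIntegral_Ioo_nonneg_of_sub_le hc.1 (hint.mono_set (Ioo_subset_Ioo_right hc.2.le))
      (fun s t has hst htc => hsub s t has hst (htc.trans hc.2) fun x hx =>
        (hφ_neg x ⟨has.trans_le hx.1, hx.2.trans_lt htc⟩).ne) ?_ ?_
    · refine tendsto_const_nhds.congr' ?_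
      filter_upwards [Ioo_mem_nhdsGT hc.1] with x hx
      have hxab : x ∈ Ioo a b := ⟨hx.1, hx.2.trans hc.2⟩
      exact (max_eq_right (piconeFun_nonpos (hP x hxab) (hdφ x hxab) (hφ_neg x hx).le)).symm
    · have := (hGc.mono_left (nhdsWithin_mono c fun x (hx : x ∈ Iio c) => ne_of_lt hx)).min
        (tendsto_const_nhds (x := (0 : ℝ)))
      rwa [min_self] at this
  have hright : 0 ≤ ∫ x in Ioo c b, (P x * u' x ^ 2 - κ * ρ x * u x ^ 2) := by
    refine setIntegral_Ioo_nonneg_of_sub_le hc.2 (hint.mono_set (Ioo_subset_Ioo_left hc.1.le))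
      (fun s t hcs hst htb => hsub s t (hc.1.trans hcs) hst htb fun x hx =>
        (hφ_pos x ⟨hcs.trans_le hx.1, hx.2.trans_lt htb⟩).ne') ?_ ?_
    · have := (hGc.mono_left (nhdsWithin_mono c fun x (hx : x ∈ Ioi c) => ne_of_gt hx)).max
        (tendsto_const_nhds (x := (0 : ℝ)))
      rwa [max_self] at this
    · refine tendsto_const_nhds.congr' ?_
      filter_upwards [Ioo_mem_nhdsLT hc.2] with x hx
      have hxab : x ∈ Ioo a b := ⟨hc.1.trans hx.1, hx.2⟩
      exact (min_eq_right (piconeFun_nonneg (hP x hxab) (hdφ x hxab) (hφ_pos x hx).le)).symm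
  rw [setIntegral_Ioo_eq_add hc hint]
  exact add_nonneg hleft hright

end Picone

theorem hasDerivAt_radial_flux {α n x : ℝ} (hL : n + 2 * α + 2 ≠ 0) (hx0 : 0 < x) (hx1 : x < 1) :
    HasDerivAt (fun y => (1 - y ^ 2) * ((1 - y ^ 2) ^ α * y ^ (n - 1)) * (2 * y))
      (-(2 * (n + 2 * α + 2) * ((1 - x ^ 2) ^ α * x ^ (n - 1)) *
        (x ^ 2 - n / (n + 2 * α + 2)))) x := by
  have hx2 : 0 < 1 - x ^ 2 := by nlinarith
  have hbase : HasDerivAt (fun y => 1 - y ^ 2) (-(2 * x)) x := by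
    simpa using (hasDerivAt_pow 2 x).const_sub 1
  have hweight := (hbase.rpow_const (p := α) (Or.inl hx2.ne')).fun_mul
    (Real.hasDerivAt_rpow_const (p := n - 1) (Or.inl hx0.ne'))
  refine ((hbase.fun_mul hweight).fun_mul ((hasDerivAt_id' x).const_mul 2)).congr_deriv ?_
  rw [Real.rpow_sub_one hx2.ne' α, Real.rpow_sub_one hx0.ne' (n - 1)]
  field_simp
  ring

theorem radial_weighted_poincare_of_eq_zero_at_node {α n : ℝ} (hα : -1 < α) (hn : 0 < n)
    {u u' : ℝ → ℝ}
    (hu : ∀ x ∈ Ioo (0 : ℝ) 1, HasDerivAt u (u' x) x)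
    (hu0 : u √(n / (n + 2 * α + 2)) = 0)
    (hint1 : IntegrableOn
      (fun r => (1 - r ^ 2) * u' r ^ 2 * (1 - r ^ 2) ^ α * r ^ (n - 1)) (Ioo 0 1))
    (hint2 : IntegrableOn (fun r => u r ^ 2 * (1 - r ^ 2) ^ α * r ^ (n - 1)) (Ioo 0 1)) :
    2 * (n + 2 * α + 2) * ∫ r in Ioo 0 1, u r ^ 2 * (1 - r ^ 2) ^ α * r ^ (n - 1) ≤
      ∫ r in Ioo 0 1, (1 - r ^ 2) * u' r ^ 2 * (1 - r ^ 2) ^ α * r ^ (n - 1) := by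
  set L := n + 2 * α + 2
  have hL : 0 < L := by linarith
  set a := n / L
  have ha : 0 < a := div_pos hn hL
  have ha1 : a < 1 := (div_lt_one hL).2 (by linarith)
  have hc : √a ∈ Ioo (0 : ℝ) 1 :=
    ⟨Real.sqrt_pos.2 ha, (Real.sqrt_lt' one_pos).2 (by rwa [one_pow])⟩
  have hc2 : √a ^ 2 = a := Real.sq_sqrt ha.le
  have hintegrand : (fun r => (1 - r ^ 2) * ((1 - r ^ 2) ^ α * r ^ (n - 1)) * u' r ^ 2 -
      2 * L * ((1 - r ^ 2) ^ α * r ^ (n - 1)) * u r ^ 2) = fun r =>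
      (1 - r ^ 2) * u' r ^ 2 * (1 - r ^ 2) ^ α * r ^ (n - 1) -
        2 * L * (u r ^ 2 * (1 - r ^ 2) ^ α * r ^ (n - 1)) := by
    funext r; ring
  have key := setIntegral_Ioo_picone_nonneg (φ := fun y => y ^ 2 - a) (dφ := fun y => 2 * y) hc
    (fun x hx => mul_nonneg (by nlinarith [hx.1, hx.2])
      (mul_nonneg (Real.rpow_nonneg (by nlinarith [hx.1, hx.2]) _)
        (Real.rpow_nonneg hx.1.le _)))
    (fun x hx => by linarith [hx.1])
    (fun x _ => by simpa using (hasDerivAt_pow 2 x).sub_const a)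
    (fun x hx => hasDerivAt_radial_flux hL.ne' hx.1 hx.2)
    (fun x hx => by nlinarith [hx.1, hx.2, hc2]) (fun x hx => by nlinarith [hx.1, hc.1, hc2])
    (by simp [hc2]) (by simp [hc.1.ne']) hu hu0
    (by rw [hintegrand]; exact hint1.sub (hint2.const_mul _))
  rw [hintegrand, integral_sub hint1 (hint2.const_mul _), integral_const_mul] at key
  linarith

section WeightedMean

variable {X : Type*} [MeasurableSpace X] {μ : Measure X} {v w : X → ℝ}

theorem integrable_mul_of_integrable_sq_mul (hw : Integrable w μ) (hw0 : 0 ≤ᵐ[μ] w)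
    (hv : AEStronglyMeasurable v μ) (hv2 : Integrable (fun x => v x ^ 2 * w x) μ) :
    Integrable (fun x => v x * w x) μ := by
  refine (hv2.add hw).mono' (hv.mul hw.aestronglyMeasurable) ?_
  filter_upwards [hw0] with x (hx : 0 ≤ w x)
  have hv1 : |v x| ≤ v x ^ 2 + 1 := by nlinarith [sq_abs (v x), sq_nonneg (|v x| - 1)]
  rw [Pi.add_apply, norm_mul, Real.norm_eq_abs, Real.norm_eq_abs, abs_of_nonneg hx]
  nlinarith [mul_le_mul_of_nonneg_right hv1 hx]

theorem integrable_sub_const_sq_mul (hw : Integrable w μ) (hw0 : 0 ≤ᵐ[μ] w)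
    (hv : AEStronglyMeasurable v μ) (hv2 : Integrable (fun x => v x ^ 2 * w x) μ) (c : ℝ) :
    Integrable (fun x => (v x - c) ^ 2 * w x) μ := by
  refine ((hv2.sub ((integrable_mul_of_integrable_sq_mul hw hw0 hv hv2).const_mul (2 * c))).add
    (hw.const_mul (c ^ 2))).congr (ae_of_all _ fun x => ?_)
  simp only [Pi.add_apply, Pi.sub_apply]
  ring

theorem integral_sq_mul_le_integral_sub_const_sq_mul (hw : Integrable w μ) (hw0 : 0 ≤ᵐ[μ] w)
    (hv : AEStronglyMeasurable v μ) (hv2 : Integrable (fun x => v x ^ 2 * w x) μ)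
    (hmean : ∫ x, v x * w x ∂μ = 0) (c : ℝ) :
    ∫ x, v x ^ 2 * w x ∂μ ≤ ∫ x, (v x - c) ^ 2 * w x ∂μ := by
  have hvw := (integrable_mul_of_integrable_sq_mul hw hw0 hv hv2).const_mul (2 * c)
  have hsub : Integrable (fun x => v x ^ 2 * w x - 2 * c * (v x * w x)) μ := hv2.sub hvw
  have hexpand : ∫ x, (v x - c) ^ 2 * w x ∂μ =
      (∫ x, v x ^ 2 * w x ∂μ) - 2 * c * (∫ x, v x * w x ∂μ) + c ^ 2 * ∫ x, w x ∂μ := by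
    calc ∫ x, (v x - c) ^ 2 * w x ∂μ
        = ∫ x, (v x ^ 2 * w x - 2 * c * (v x * w x) + c ^ 2 * w x) ∂μ :=
          integral_congr_ae (ae_of_all _ fun x => by ring)
      _ = _ := by
          rw [integral_add hsub (hw.const_mul _), integral_sub hv2 hvw,
            integral_const_mul, integral_const_mul]
  rw [hexpand, hmean]
  linarith [mul_nonneg (sq_nonneg c) (integral_nonneg_of_ae hw0)]

end WeightedMean

theorem integrableOn_radial_weight {α n : ℝ} (hα : 0 ≤ α) (hn : 1 ≤ n) :
    IntegrableOn (fun r => (1 - r ^ 2) ^ α * r ^ (n - 1)) (Ioo (0 : ℝ) 1) := by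
  refine Measure.integrableOn_of_bounded (M := 1) (by simp)
    (by fun_prop) (ae_restrict_of_forall_mem measurableSet_Ioo fun r hr => ?_)
  have hr2 : 0 ≤ 1 - r ^ 2 := by nlinarith [hr.1, hr.2]
  rw [Real.norm_eq_abs, abs_of_nonneg (mul_nonneg (Real.rpow_nonneg hr2 _)
    (Real.rpow_nonneg hr.1.le _))]
  exact mul_le_one₀ (Real.rpow_le_one hr2 (by nlinarith [hr.1]) hα)
    (Real.rpow_nonneg hr.1.le _) (Real.rpow_le_one hr.1.le hr.2.le (by linarith))

theorem alphaExp_pos {N : ℕ} {p : ℝ} (hN : 1 ≤ N) (hp1 : 1 < p)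
    (hpc : 2 ≤ N → p < 1 + 4 / ((N : ℝ) - 1)) : 0 < alphaExp N p := by
  rw [alphaExp, sub_pos, div_lt_div_iff₀ two_pos (by linarith)]
  obtain rfl | hN2 : N = 1 ∨ 2 ≤ N := by omega
  · norm_num
  · have hN' : (1 : ℝ) < N := by exact_mod_cast hN2
    have := hpc hN2
    rw [← sub_lt_iff_lt_add', lt_div_iff₀ (by linarith)] at this
    linarith

theorem natCast_add_two_mul_alphaExp_add_two (N : ℕ) {p : ℝ} (hp : p ≠ 1) :
    (N : ℝ) + 2 * alphaExp N p + 2 = (3 * p + 1) / (p - 1) := by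
  have : p - 1 ≠ 0 := sub_ne_zero.2 hp
  rw [alphaExp]
  field_simp
  ring

/-- Radial weighted Poincaré inequality with mean-zero condition (mode k = 0). -/
theorem stmt10 (N : ℕ) (p : ℝ) (hN : 1 ≤ N) (hp1 : 1 < p)
    (hpc : 2 ≤ N → p < 1 + 4 / ((N : ℝ) - 1))
    (v : ℝ → ℝ) (hv : ContDiffOn ℝ 1 v (Set.Ioo (0 : ℝ) 1))
    (hint1 : IntegrableOn
      (fun r => (1 - r ^ 2) * deriv v r ^ 2 * (1 - r ^ 2) ^ alphaExp N p *
        r ^ ((N : ℝ) - 1)) (Set.Ioo (0 : ℝ) 1))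
    (hint2 : IntegrableOn
      (fun r => v r ^ 2 * (1 - r ^ 2) ^ alphaExp N p * r ^ ((N : ℝ) - 1))
      (Set.Ioo (0 : ℝ) 1))
    (hmean : (∫ r in Set.Ioo (0 : ℝ) 1,
      v r * (1 - r ^ 2) ^ alphaExp N p * r ^ ((N : ℝ) - 1)) = 0) :
    2 * (3 * p + 1) / (p - 1) *
        ∫ r in Set.Ioo (0 : ℝ) 1,
          v r ^ 2 * (1 - r ^ 2) ^ alphaExp N p * r ^ ((N : ℝ) - 1)
      ≤ ∫ r in Set.Ioo (0 : ℝ) 1,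
          (1 - r ^ 2) * deriv v r ^ 2 * (1 - r ^ 2) ^ alphaExp N p *
            r ^ ((N : ℝ) - 1) := by
  have hα := alphaExp_pos hN hp1 hpc
  have hn : (1 : ℝ) ≤ N := by exact_mod_cast hN
  have hw := integrableOn_radial_weight hα.le hn
  have hw0 : 0 ≤ᵐ[volume.restrict (Ioo 0 1)]
      fun r : ℝ => (1 - r ^ 2) ^ alphaExp N p * r ^ ((N : ℝ) - 1) :=
    ae_restrict_of_forall_mem measurableSet_Ioo fun r hr => mul_nonneg
      (Real.rpow_nonneg (by nlinarith [hr.1, hr.2]) _) (Real.rpow_nonneg hr.1.le _)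
  have hvm : AEStronglyMeasurable v (volume.restrict (Ioo 0 1)) :=
    hv.continuousOn.aestronglyMeasurable measurableSet_Ioo
  have hv2 := hint2
  simp only [mul_assoc] at hv2 hmean
  set c := v √(N / (N + 2 * alphaExp N p + 2))
  have hpoincare := radial_weighted_poincare_of_eq_zero_at_node (by linarith) (by linarith)
    (u := fun r => v r - c) (u' := deriv v)
    (fun x hx => ((hv.differentiableOn one_ne_zero).differentiableAt
      (isOpen_Ioo.mem_nhds hx)).hasDerivAt.sub_const c) (sub_self _) hint1
    (by simpa only [IntegrableOn, mul_assoc] using integrable_sub_const_sq_mul hw hw0 hvm hv2 c)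
  have hshift := integral_sq_mul_le_integral_sub_const_sq_mul hw hw0 hvm hv2 hmean c
  simp only [← mul_assoc] at hshift
  rw [mul_div_assoc, ← natCast_add_two_mul_alphaExp_add_two N hp1.ne']
  exact (mul_le_mul_of_nonneg_left hshift (by linarith)).trans hpoincare
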